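/- arXiv:2501.04450 — 9 statements merged into one kernel-verified Lean document; each statement's English description precedes it below -/
import Mathlib

section
/- If p(z) = (z-α)^k q(z) with q(α) ≠ 0 and k ≥ 1, then α is a fixed point of the damped Traub map T_δ, and the multiplier satisfies T_δ'(α) = (k-1)/k - δ·((k-1)/k)^k · (1/k). In particular, if k = 1 then α is a superattracting fixed point for all δ ∈ ℂ. -/
open Polynomial Filter Topology

noncomputable def Np (p : Polynomial ℂ) (z : ℂ) : ℂ :=
  z - p.eval z / (p.derivative.eval z)

noncomputable def Td (p : Polynomial ℂ) (δ z : ℂ) : ℂ :=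
  Np p z - δ * p.eval (Np p z) / (p.derivative.eval z)

theorem traub_fixed_point_multiplier (p q : Polynomial ℂ) (α δ : ℂ) (k : ℕ)
    (hk : 1 ≤ k) (hq : q.eval α ≠ 0) (hp : p = (X - C α) ^ k * q) :
    Td p δ α = α ∧
    deriv (Td p δ) α = ((k : ℂ) - 1) / k - δ * (((k : ℂ) - 1) / k) ^ k * (1 / k) ∧
    (k = 1 → deriv (Td p δ) α = 0) := by
  have hk0 : (k : ℂ) ≠ 0 := by exact_mod_cast Nat.cast_ne_zero.mpr (by omega)
  have hpα : p.eval α = 0 := by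
    simp [hp, zero_pow (by omega : k ≠ 0)]
  have hNα : Np p α = α := by simp [Np, hpα]
  have hfix : Td p δ α = α := by simp [Td, hNα, hpα]
  -- factor the derivative polynomial
  set r : Polynomial ℂ := C (k : ℂ) * q + (X - C α) * derivative q with hr
  have hp' : p.derivative = (X - C α) ^ (k - 1) * r := by
    rw [hp, derivative_mul, derivative_X_sub_C_pow]
    have hXk : (X - C α) ^ k = (X - C α) ^ (k - 1) * (X - C α) := by
      rw [← pow_succ]; congr 1; omega
    rw [hXk, hr]; ring
  have hrα : r.eval α = (k : ℂ) * q.eval α := by simp [hr]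
  have hrα0 : r.eval α ≠ 0 := by rw [hrα]; exact mul_ne_zero hk0 hq
  -- the auxiliary functions
  set g : ℂ → ℂ := fun z => (r.eval z - q.eval z) / r.eval z with hg
  set H : ℂ → ℂ := fun z =>
    g z - δ * (g z) ^ k * q.eval (α + (z - α) * g z) / r.eval z with hH
  have hgα : g α = ((k : ℂ) - 1) / k := by
    rw [hg]; simp only
    rw [hrα]
    field_simp
  have hHα : H α = ((k : ℂ) - 1) / k - δ * (((k : ℂ) - 1) / k) ^ k * (1 / k) := by
    rw [hH]; simp only
    rw [sub_self, zero_mul, add_zero, hgα, hrα]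
    field_simp
  -- continuity of H at α
  have hrc : Continuous fun z => r.eval z := r.continuous_aeval
  have hqc : Continuous fun z => q.eval z := q.continuous_aeval
  have hHc : ContinuousAt H α := by
    have hgc : ContinuousAt g α := (hrc.sub hqc).continuousAt.div hrc.continuousAt hrα0
    exact ContinuousAt.sub hgc <| ContinuousAt.div
      (((continuousAt_const.mul (hgc.pow k)).mul
        (hqc.continuousAt.comp (by fun_prop))))
      hrc.continuousAt hrα0
  -- key identity on a punctured neighborhood
  have hev : ∀ᶠ z in 𝓝[≠] α, slope (Td p δ) α z = H z := by
    have hopen : ∀ᶠ z in 𝓝 α, r.eval z ≠ 0 :=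
      hrc.continuousAt.eventually_ne hrα0
    filter_upwards [self_mem_nhdsWithin, eventually_nhdsWithin_of_eventually_nhds hopen]
      with z hz hrz
    have hzα : z - α ≠ 0 := sub_ne_zero.mpr hz
    have hzk : (z - α) ^ (k - 1) ≠ 0 := pow_ne_zero _ hzα
    have hevp : p.eval z = (z - α) ^ k * q.eval z := by simp [hp]
    have hevp' : p.derivative.eval z = (z - α) ^ (k - 1) * r.eval z := by
      simp [hp']
    have hpow : (z - α) ^ k = (z - α) ^ (k - 1) * (z - α) := by
      rw [← pow_succ]; congr 1; omega
    have hNz : Np p z = α + (z - α) * g z := by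
      rw [Np, hevp, hevp', hpow, hg]
      field_simp
      ring
    have hNz' : Np p z - α = (z - α) * g z := by rw [hNz]; ring
    have hpN : p.eval (Np p z) = (z - α) ^ k * (g z) ^ k * q.eval (Np p z) := by
      have h1 : ∀ w, p.eval w = (w - α) ^ k * q.eval w := by
        intro w; rw [hp]; simp
      rw [h1, hNz', mul_pow]
    have hTd : Td p δ z = α + (z - α) * H z := by
      rw [Td, hpN, hevp', hNz, hH]
      simp only
      rw [hpow]
      field_simp
      ring
    rw [slope_def_field, hfix, hTd]
    field_simp
    ring
  have hderiv : HasDerivAt (Td p δ) (H α) α := by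
    rw [hasDerivAt_iff_tendsto_slope]
    exact (hHc.tendsto.mono_left nhdsWithin_le_nhds).congr'
      (hev.mono fun z h => h.symm)
  refine ⟨hfix, by rw [hderiv.deriv, hHα], fun h1 => ?_⟩
  rw [hderiv.deriv, hHα, h1]
  norm_num
end

section
/- If p(z) = (z-α)^k q(z) with q(α) ≠ 0 and k ≥ 2, then α is an attracting fixed point of T_δ (i.e. |T_δ'(α)| < 1) if and only if |δ - k^k/(k-1)^(k-1)| < k^(k+1)/(k-1)^k. -/
open Polynomial Filter Topology

noncomputable def Raux (q : Polynomial ℂ) (α : ℂ) (k : ℕ) (z : ℂ) : ℂ :=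
  (k : ℂ) * q.eval z + (z - α) * (derivative q).eval z

noncomputable def uaux (q : Polynomial ℂ) (α : ℂ) (k : ℕ) (z : ℂ) : ℂ :=
  1 - q.eval z / Raux q α k z

noncomputable def gNaux (q : Polynomial ℂ) (α : ℂ) (k : ℕ) (z : ℂ) : ℂ :=
  α + (z - α) * uaux q α k z

noncomputable def haux (q : Polynomial ℂ) (α δ : ℂ) (k : ℕ) (z : ℂ) : ℂ :=
  uaux q α k z - δ * (uaux q α k z) ^ k * q.eval (gNaux q α k z) / Raux q α k z

noncomputable def gaux (q : Polynomial ℂ) (α δ : ℂ) (k : ℕ) (z : ℂ) : ℂ :=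
  α + (z - α) * haux q α δ k z

theorem traub_multiple_root_attracting_iff (p q : Polynomial ℂ) (α δ : ℂ) (k : ℕ)
    (hk : 2 ≤ k) (hq : q.eval α ≠ 0) (hp : p = (X - C α) ^ k * q) :
    ‖deriv (Td p δ) α‖ < 1 ↔
      ‖δ - (k : ℂ) ^ k / ((k : ℂ) - 1) ^ (k - 1)‖ < (k : ℝ) ^ (k + 1) / ((k : ℝ) - 1) ^ k := by
  obtain ⟨j, rfl⟩ : ∃ j, k = j + 2 := ⟨k - 2, by omega⟩
  clear hk
  set m : ℂ := ((j : ℂ) + 2) with hm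
  have hmcast : ((j + 2 : ℕ) : ℂ) = m := by push_cast [hm]; ring
  have hm0 : m ≠ 0 := by
    rw [← hmcast]; exact Nat.cast_ne_zero.mpr (by omega)
  have hm1 : m - 1 ≠ 0 := by
    have : m - 1 = ((j + 1 : ℕ) : ℂ) := by push_cast [hm]; ring
    rw [this]; exact Nat.cast_ne_zero.mpr (by omega)
  -- derivative identity
  have hd : p.derivative = (X - C α) ^ (j + 1) *
      (C ((j + 2 : ℕ) : ℂ) * q + (X - C α) * derivative q) := by
    rw [hp, derivative_mul, derivative_X_sub_C_pow,
      show j + 2 - 1 = j + 1 from rfl]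
    ring
  have hevalp : ∀ z, p.eval z = (z - α) ^ (j + 2) * q.eval z := by
    intro z; rw [hp]; simp
  have hevald : ∀ z, p.derivative.eval z = (z - α) ^ (j + 1) * Raux q α (j + 2) z := by
    intro z; rw [hd]; simp [Raux]
  have hRα : Raux q α (j + 2) α = m * q.eval α := by
    simp [Raux, hmcast]
  have hRα0 : Raux q α (j + 2) α ≠ 0 := by
    rw [hRα]; exact mul_ne_zero hm0 hq
  -- eventual equality of Td and gaux
  have hRcont : Continuous (Raux q α (j + 2)) := by
    unfold Raux
    exact (continuous_const.mul q.continuous).add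
      ((continuous_id.sub continuous_const).mul (derivative q).continuous)
  have hRne : ∀ᶠ z in 𝓝 α, Raux q α (j + 2) z ≠ 0 :=
    hRcont.continuousAt.eventually_ne hRα0
  have heq : Td p δ =ᶠ[𝓝 α] gaux q α δ (j + 2) := by
    filter_upwards [hRne] with z hz
    by_cases hzα : z = α
    · subst hzα
      have h1 : p.eval z = 0 := by rw [hevalp]; simp
      have h2 : p.derivative.eval z = 0 := by rw [hevald]; simp
      simp [Td, Np, gaux, h1, h2]
    · have hza : z - α ≠ 0 := sub_ne_zero.mpr hzα
      have hNp : Np p z = gNaux q α (j + 2) z := by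
        rw [Np, hevalp, hevald, gNaux, uaux]
        field_simp
        ring
      have hpd : p.derivative.eval z ≠ 0 := by
        rw [hevald]; exact mul_ne_zero (pow_ne_zero _ hza) hz
      have hNpα : Np p z - α = (z - α) * uaux q α (j + 2) z := by
        rw [hNp, gNaux]; ring
      rw [Td, hNp, hevalp (gNaux q α (j+2) z), hevald, gaux, haux]
      rw [show gNaux q α (j+2) z - α = (z - α) * uaux q α (j+2) z from by rw [gNaux]; ring,
        mul_pow]
      simp only [gNaux]
      field_simp
      ring
  -- derivative of gaux at α
  have hQd : ∀ x : ℂ, DifferentiableAt ℂ (fun z => q.eval z) x := fun x => q.differentiableAt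
  have hRd : DifferentiableAt ℂ (Raux q α (j + 2)) α := by
    unfold Raux
    exact ((differentiableAt_const _).mul (hQd α)).add
      ((differentiableAt_id.sub (differentiableAt_const _)).mul
        ((derivative q).differentiableAt))
  have hud : DifferentiableAt ℂ (uaux q α (j + 2)) α := by
    unfold uaux
    exact (differentiableAt_const 1).sub ((hQd α).div hRd hRα0)
  have hgNd : DifferentiableAt ℂ (gNaux q α (j + 2)) α := by
    unfold gNaux
    exact (differentiableAt_const α).add
      ((differentiableAt_id.sub (differentiableAt_const α)).mul hud)
  have hcomp : DifferentiableAt ℂ (fun z => q.eval (gNaux q α (j + 2) z)) α :=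
    (q.differentiableAt).comp α hgNd
  have hhd : DifferentiableAt ℂ (haux q α δ (j + 2)) α := by
    unfold haux
    exact hud.sub
      ((((differentiableAt_const δ).mul (hud.pow _)).mul hcomp).div hRd hRα0)
  have h1 : HasDerivAt (fun z : ℂ => z - α) 1 α := (hasDerivAt_id α).sub_const α
  have h2 : HasDerivAt (haux q α δ (j + 2)) (deriv (haux q α δ (j + 2)) α) α :=
    hhd.hasDerivAt
  have h3 := (h1.mul h2).const_add α
  have hderiv : deriv (gaux q α δ (j + 2)) α = haux q α δ (j + 2) α := by
    have : HasDerivAt (gaux q α δ (j + 2))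
        (1 * haux q α δ (j + 2) α + (α - α) * deriv (haux q α δ (j + 2)) α) α := h3
    rw [this.deriv]; ring
  have hDeq : deriv (Td p δ) α = haux q α δ (j + 2) α := by
    rw [heq.deriv_eq, hderiv]
  -- compute haux at α
  have hgNα : gNaux q α (j + 2) α = α := by simp [gNaux]
  have huα : uaux q α (j + 2) α = (m - 1) / m := by
    rw [uaux, hRα]
    field_simp
  have hhα : haux q α δ (j + 2) α =
      (((m - 1) / m) ^ (j + 2) / m) * (m ^ (j + 2) / (m - 1) ^ (j + 1) - δ) := by
    rw [haux, hgNα, huα, hRα]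
    rw [div_pow]
    field_simp
    ring
  rw [hDeq, hhα]
  -- norms
  have hnm : ‖m‖ = (j : ℝ) + 2 := by
    rw [← hmcast, Complex.norm_natCast]; push_cast; ring
  have hnm1 : ‖m - 1‖ = (j : ℝ) + 1 := by
    have : m - 1 = ((j + 1 : ℕ) : ℂ) := by push_cast [hm]; ring
    rw [this, Complex.norm_natCast]; push_cast; ring
  have c1pos : (0 : ℝ) < (j : ℝ) + 1 := by positivity
  have c2pos : (0 : ℝ) < (j : ℝ) + 2 := by positivity
  have hnorm1 : ‖((m - 1) / m) ^ (j + 2) / m‖ =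
      (((j : ℝ) + 1) / ((j : ℝ) + 2)) ^ (j + 2) / ((j : ℝ) + 2) := by
    rw [norm_div, norm_pow, norm_div, hnm, hnm1]
  rw [norm_mul, hnorm1]
  have hcastR : ((j + 2 : ℕ) : ℝ) = (j : ℝ) + 2 := by push_cast; ring
  have hgoalR : ((j + 2 : ℕ) : ℝ) ^ (j + 2 + 1) / (((j + 2 : ℕ) : ℝ) - 1) ^ (j + 2) =
      ((j : ℝ) + 2) ^ (j + 3) / ((j : ℝ) + 1) ^ (j + 2) := by
    rw [hcastR]; ring_nf
  have hCcast : ‖δ - ((j + 2 : ℕ) : ℂ) ^ (j + 2) / (((j + 2 : ℕ) : ℂ) - 1) ^ (j + 2 - 1)‖ =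
      ‖m ^ (j + 2) / (m - 1) ^ (j + 1) - δ‖ := by
    rw [norm_sub_rev, hmcast, show j + 2 - 1 = j + 1 from rfl]
  rw [hCcast, hgoalR]
  set x := ‖m ^ (j + 2) / (m - 1) ^ (j + 1) - δ‖ with hx
  have hxnn : 0 ≤ x := norm_nonneg _
  constructor
  · intro h
    rw [lt_div_iff₀ (by positivity)]
    have h' : (((j:ℝ)+1)/((j:ℝ)+2)) ^ (j+2) / ((j:ℝ)+2) * x < 1 := h
    rw [div_pow, div_div, div_mul_eq_mul_div, div_lt_one (by positivity)] at h'
    calc x * ((j:ℝ)+1)^(j+2) = ((j:ℝ)+1)^(j+2) * x := by ring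
    _ < ((j:ℝ)+2)^(j+2) * ((j:ℝ)+2) := h'
    _ = ((j:ℝ)+2)^(j+3) := by ring
  · intro h
    rw [lt_div_iff₀ (by positivity)] at h
    show (((j:ℝ)+1)/((j:ℝ)+2)) ^ (j+2) / ((j:ℝ)+2) * x < 1
    rw [div_pow, div_div, div_mul_eq_mul_div, div_lt_one (by positivity)]
    calc ((j:ℝ)+1)^(j+2) * x = x * ((j:ℝ)+1)^(j+2) := by ring
    _ < ((j:ℝ)+2)^(j+3) := h
    _ = ((j:ℝ)+2)^(j+2) * ((j:ℝ)+2) := by ring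
end

section
/- For a monic polynomial p of degree d ≥ 2 with all roots simple, one has the identity p(N_p(z))·p'(z)^d = p(z)^2 · r(z), where r(z) = ∏_{i=1}^d ∑_{k≠i} p_{k,i}(z), with p_{k,i}(z) = ∏_{j≠i,k}(z-α_j), and r is a polynomial of degree d²-2d. -/
open Polynomial Filter Topology

theorem traub_pNp_factorization (d : ℕ) (hd : 2 ≤ d) (α : Fin d → ℂ)
    (hα : Function.Injective α) (p r : Polynomial ℂ)
    (hp : p = ∏ i, (X - C (α i)))
    (hr : r = ∏ i, ∑ k ∈ Finset.univ.erase i,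
        ∏ j ∈ (Finset.univ.erase i).erase k, (X - C (α j))) :
    (∀ z : ℂ, p.derivative.eval z ≠ 0 →
        p.eval (Np p z) * (p.derivative.eval z) ^ d = (p.eval z) ^ 2 * r.eval z) ∧
    r.natDegree = d ^ 2 - 2 * d := by
  classical
  set s : Fin d → Polynomial ℂ := fun i => ∑ k ∈ Finset.univ.erase i,
      ∏ j ∈ (Finset.univ.erase i).erase k, (X - C (α j)) with hs
  have hderiv : derivative p = ∑ k, ∏ j ∈ Finset.univ.erase k, (X - C (α j)) := by
    rw [hp, Finset.prod_eq_multiset_prod, derivative_prod, Finset.sum_eq_multiset_sum]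
    refine congrArg Multiset.sum (Multiset.map_congr rfl fun i hi => ?_)
    rw [derivative_X_sub_C, mul_one, ← Finset.erase_val, ← Finset.prod_eq_multiset_prod]
  have hfactor : ∀ i, (X - C (α i)) * derivative p - p
      = (X - C (α i)) ^ 2 * s i := by
    intro i
    have hsplit : (∑ k, ∏ j ∈ Finset.univ.erase k, (X - C (α j)))
        = (∏ j ∈ Finset.univ.erase i, (X - C (α j)))
          + ∑ k ∈ Finset.univ.erase i, ∏ j ∈ Finset.univ.erase k, (X - C (α j)) :=
      (Finset.add_sum_erase _ _ (Finset.mem_univ i)).symm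
    have hpprod : (X - C (α i)) * ∏ j ∈ Finset.univ.erase i, (X - C (α j)) = p := by
      rw [hp]
      exact Finset.mul_prod_erase Finset.univ (fun j => X - C (α j)) (Finset.mem_univ i)
    rw [hderiv, hsplit, mul_add, hpprod, add_sub_cancel_left, Finset.mul_sum]
    simp only [hs]
    rw [Finset.mul_sum]
    refine Finset.sum_congr rfl fun k hk => ?_
    have hik : i ≠ k := fun h => (Finset.mem_erase.1 hk).1 h.symm
    have hi : i ∈ Finset.univ.erase k := Finset.mem_erase.2 ⟨hik, Finset.mem_univ i⟩
    rw [← Finset.mul_prod_erase _ _ hi, Finset.erase_right_comm]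
    ring
  have hprod : (∏ i, ((X - C (α i)) * derivative p - p)) = p ^ 2 * r := by
    rw [hr]
    calc (∏ i, ((X - C (α i)) * derivative p - p))
        = ∏ i, (X - C (α i)) ^ 2 * s i :=
          Finset.prod_congr rfl fun i _ => hfactor i
      _ = (∏ i, (X - C (α i)) ^ 2) * ∏ i, s i := Finset.prod_mul_distrib
      _ = p ^ 2 * ∏ i, s i := by rw [Finset.prod_pow, ← hp]
  have hevp : ∀ w : ℂ, p.eval w = ∏ i, (w - α i) := by
    intro w
    rw [hp, eval_prod]
    simp
  constructor
  · intro z hz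
    set e := p.derivative.eval z with he
    set P := p.eval z with hP
    have hn : Np p z = z - P / e := rfl
    have hne : ∀ i : Fin d, Np p z - α i = ((z - α i) * e - P) / e := by
      intro i
      rw [hn]
      field_simp
      ring
    have hev : p.eval (Np p z) = (∏ i, ((z - α i) * e - P)) / e ^ d := by
      rw [hevp, Finset.prod_congr rfl fun i _ => hne i, Finset.prod_div_distrib,
        Finset.prod_const]
      simp
    rw [hev, div_mul_cancel₀ _ (pow_ne_zero d hz)]
    have h2 := congrArg (Polynomial.eval z) hprod
    rw [eval_prod, eval_mul, eval_pow] at h2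
    simp only [eval_sub, eval_mul, eval_X, eval_C] at h2
    rw [← h2]
  · have hterm : ∀ i : Fin d, ∀ k ∈ Finset.univ.erase i,
        (∏ j ∈ (Finset.univ.erase i).erase k, (X - C (α j))).natDegree = d - 2
        ∧ (∏ j ∈ (Finset.univ.erase i).erase k, (X - C (α j))).Monic := by
      intro i k hk
      have hm : (∏ j ∈ (Finset.univ.erase i).erase k, (X - C (α j))).Monic :=
        monic_prod_of_monic _ _ fun j _ => monic_X_sub_C _
      have hcard : ((Finset.univ.erase i).erase k).card = d - 2 := by
        rw [Finset.card_erase_of_mem hk, Finset.card_erase_of_mem (Finset.mem_univ i),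
          Finset.card_univ, Fintype.card_fin]
        omega
      refine ⟨?_, hm⟩
      rw [natDegree_prod_of_monic _ _ fun j _ => monic_X_sub_C _]
      simp [natDegree_X_sub_C, hcard]
    have hsdeg : ∀ i : Fin d, (s i).natDegree = d - 2 ∧ s i ≠ 0 := by
      intro i
      have hcoeff : (s i).coeff (d - 2) = ((d - 1 : ℕ) : ℂ) := by
        simp only [hs]
        rw [finset_sum_coeff]
        have h1 : ∀ k ∈ Finset.univ.erase i,
            (∏ j ∈ (Finset.univ.erase i).erase k, (X - C (α j))).coeff (d - 2) = 1 := by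
          intro k hk
          have h := hterm i k hk
          rw [← h.1]
          exact h.2.coeff_natDegree
        rw [Finset.sum_congr rfl h1, Finset.sum_const,
          Finset.card_erase_of_mem (Finset.mem_univ i), Finset.card_univ, Fintype.card_fin]
        simp
      have hcne : (s i).coeff (d - 2) ≠ 0 := by
        rw [hcoeff]
        have h3 : d - 1 ≠ 0 := by omega
        exact_mod_cast Nat.cast_ne_zero.mpr h3
      have hle : (s i).natDegree ≤ d - 2 := by
        simp only [hs]
        refine natDegree_sum_le_of_forall_le _ _ fun k hk => ?_
        rw [(hterm i k hk).1]
      exact ⟨le_antisymm hle (le_natDegree_of_ne_zero hcne),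
        fun h => hcne (by simp [h])⟩
    have hrd : r.natDegree = ∑ i : Fin d, (s i).natDegree := by
      rw [hr]
      exact natDegree_prod _ _ fun i _ => (hsdeg i).2
    rw [hrd, Finset.sum_congr rfl fun i _ => (hsdeg i).1, Finset.sum_const]
    simp only [Finset.card_univ, Fintype.card_fin, smul_eq_mul]
    rw [pow_two, Nat.mul_sub, Nat.mul_comm d 2]
end

section
/- For a monic polynomial p of degree d ≥ 2 and δ ≠ d^d/(d-1)^(d-1), the damped Traub rational map T_{p,δ} fixes infinity with multiplier T'_{p,δ}(∞) = d^(d+1) / ((d-1)·(d^d - δ(d-1)^(d-1))). Consequently ∞ is repelling if and only if 0 < |δ - d^d/(d-1)^(d-1)| < d^(d+1)/(d-1)^d. -/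
open Polynomial Filter Topology Finset

theorem traub_multiplier_at_infinity (d : ℕ) (hd : 2 ≤ d) (p : Polynomial ℂ)
    (hmonic : p.Monic) (hdeg : p.natDegree = d) (δ : ℂ)
    (hδ : δ ≠ (d : ℂ) ^ d / ((d : ℂ) - 1) ^ (d - 1)) :
    Tendsto (fun z : ℂ => 1 / Td p δ (1 / z)) (𝓝[≠] 0) (𝓝 0) ∧
    Tendsto (fun z : ℂ => (1 / Td p δ (1 / z)) / z) (𝓝[≠] 0)
      (𝓝 ((d : ℂ) ^ (d + 1) / (((d : ℂ) - 1) * ((d : ℂ) ^ d - δ * ((d : ℂ) - 1) ^ (d - 1))))) ∧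
    (1 < ‖(d : ℂ) ^ (d + 1) / (((d : ℂ) - 1) * ((d : ℂ) ^ d - δ * ((d : ℂ) - 1) ^ (d - 1)))‖ ↔
      0 < ‖δ - (d : ℂ) ^ d / ((d : ℂ) - 1) ^ (d - 1)‖ ∧
      ‖δ - (d : ℂ) ^ d / ((d : ℂ) - 1) ^ (d - 1)‖ < (d : ℝ) ^ (d + 1) / ((d : ℝ) - 1) ^ d) := by
  have hd1 : 1 ≤ d := by omega
  have hcd : p.coeff d = 1 := by rw [← hdeg]; exact hmonic.coeff_natDegree
  have hdlt : p.derivative.natDegree < d := by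
    have := p.natDegree_derivative_lt (hdeg ▸ (by omega : d ≠ 0))
    omega
  have hcd' : p.derivative.coeff (d - 1) = d := by
    rw [Polynomial.coeff_derivative, Nat.sub_add_cancel hd1, hcd]
    push_cast [Nat.cast_sub hd1]; ring
  -- the auxiliary continuous functions
  set q : ℂ → ℂ := fun z => ∑ i ∈ range (d + 1), p.coeff i * z ^ (d - i) with hq
  set r : ℂ → ℂ := fun z => ∑ i ∈ range d, p.derivative.coeff i * z ^ (d - 1 - i) with hr
  set s : ℂ → ℂ := fun z => r z - q z with hs
  set Q : ℂ → ℂ := fun z => ∑ i ∈ range (d + 1), p.coeff i * s z ^ i * (z * r z) ^ (d - i) with hQ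
  set F : ℂ → ℂ := fun z => s z * r z ^ d - δ * Q z with hF
  -- continuity
  have cq : Continuous q := by unfold q; fun_prop
  have cr : Continuous r := by unfold r; fun_prop
  have cs : Continuous s := by unfold s; fun_prop
  have cQ : Continuous Q := by unfold Q; fun_prop
  have cF : Continuous F := by unfold F; fun_prop
  -- values at 0
  have hq0 : q 0 = 1 := by
    rw [hq]
    beta_reduce
    rw [Finset.sum_eq_single d]
    · simp [hcd]
    · intro i hi hne
      rw [zero_pow (by simp at hi; omega)]; ring
    · simp
  have hr0 : r 0 = d := by
    rw [hr]
    beta_reduce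
    rw [Finset.sum_eq_single (d - 1)]
    · simp [hcd']
    · intro i hi hne
      rw [zero_pow (by simp at hi; omega)]; ring
    · intro h; simp at h; omega
  have hs0 : s 0 = (d : ℂ) - 1 := by rw [hs]; beta_reduce; simp [hq0, hr0]
  have hQ0 : Q 0 = ((d : ℂ) - 1) ^ d := by
    rw [hQ]
    beta_reduce
    rw [Finset.sum_eq_single d]
    · simp [hcd, hs0]
    · intro i hi hne
      rw [mul_pow, zero_pow (by simp at hi; omega)]; ring
    · simp
  have hF0 : F 0 = ((d : ℂ) - 1) * ((d : ℂ) ^ d - δ * ((d : ℂ) - 1) ^ (d - 1)) := by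
    rw [hF]; beta_reduce; rw [hs0, hr0, hQ0]
    have : ((d:ℂ) - 1) ^ d = ((d:ℂ) - 1) * ((d:ℂ) - 1) ^ (d - 1) := by
      have h := pow_succ' ((d:ℂ) - 1) (d - 1)
      rwa [Nat.sub_add_cancel hd1] at h
    rw [this]; ring
  -- nonzero facts
  have hdC : (d:ℂ) ≠ 0 := Nat.cast_ne_zero.mpr (by omega)
  have hd1C : (d:ℂ) - 1 ≠ 0 := sub_ne_zero.mpr (by exact_mod_cast (by omega : d ≠ 1))
  have hF0ne : F 0 ≠ 0 := by
    rw [hF0]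
    refine mul_ne_zero hd1C fun h => hδ ?_
    rw [eq_div_iff (pow_ne_zero _ hd1C)]
    linear_combination -h
  -- identities
  have hqz : ∀ z : ℂ, z ≠ 0 → q z = p.eval (1/z) * z ^ d := by
    intro z hz
    rw [eval_eq_sum_range' (by rw [hdeg]; omega : p.natDegree < d + 1), Finset.sum_mul, hq]
    beta_reduce
    refine Finset.sum_congr rfl fun i hi => ?_
    simp only [Finset.mem_range] at hi
    have key : z ^ d = z ^ (d - i) * z ^ i := by rw [← pow_add]; congr 1; omega
    rw [key, one_div, inv_pow]
    field_simp
  have hrz : ∀ z : ℂ, z ≠ 0 → r z = p.derivative.eval (1/z) * z ^ (d - 1) := by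
    intro z hz
    rw [eval_eq_sum_range' hdlt, Finset.sum_mul, hr]
    beta_reduce
    refine Finset.sum_congr rfl fun i hi => ?_
    simp only [Finset.mem_range] at hi
    have key : z ^ (d - 1) = z ^ (d - 1 - i) * z ^ i := by rw [← pow_add]; congr 1; omega
    rw [key, one_div, inv_pow]
    field_simp
  have hzd : ∀ z : ℂ, z ^ d = z ^ (d - 1) * z := fun z => by
    rw [← pow_succ]; congr 1; omega
  have hNp : ∀ z : ℂ, z ≠ 0 → r z ≠ 0 → Np p (1/z) = s z / (z * r z) := by
    intro z hz hrne
    have h1 : p.eval (1/z) = q z / z ^ d := by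
      rw [hqz z hz, mul_div_cancel_right₀ _ (pow_ne_zero _ hz)]
    have h2 : p.derivative.eval (1/z) = r z / z ^ (d - 1) := by
      rw [hrz z hz, mul_div_cancel_right₀ _ (pow_ne_zero _ hz)]
    rw [Np, h1, h2, hs, hzd z]
    beta_reduce
    have hz1 : z ^ (d - 1) ≠ 0 := pow_ne_zero _ hz
    field_simp
  have hQz : ∀ z : ℂ, z ≠ 0 → r z ≠ 0 → p.eval (s z / (z * r z)) = Q z / (z * r z) ^ d := by
    intro z hz hrne
    have hzr : z * r z ≠ 0 := mul_ne_zero hz hrne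
    rw [eval_eq_sum_range' (by rw [hdeg]; omega : p.natDegree < d + 1),
      eq_div_iff (pow_ne_zero _ hzr), Finset.sum_mul, hQ]
    beta_reduce
    refine Finset.sum_congr rfl fun i hi => ?_
    simp only [Finset.mem_range] at hi
    have key : (z * r z) ^ d = (z * r z) ^ (d - i) * (z * r z) ^ i := by
      rw [← pow_add]; congr 1; omega
    rw [key, div_pow]
    field_simp
  have hTd : ∀ z : ℂ, z ≠ 0 → r z ≠ 0 → Td p δ (1/z) = F z / (z * r z ^ (d + 1)) := by
    intro z hz hrne
    have h2 : p.derivative.eval (1/z) = r z / z ^ (d - 1) := by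
      rw [hrz z hz, mul_div_cancel_right₀ _ (pow_ne_zero _ hz)]
    have field_id : ∀ (a Q' R P W Z dl : ℂ), Z ≠ 0 → R ≠ 0 → P ≠ 0 → W ≠ 0 →
        a / (Z * R) - dl * (Q' / (W * Z * P)) / (R / W) = (a * P - dl * Q') / (Z * (P * R)) := by
      intro a Q' R P W Z dl hZ hR hP' hW'
      have hden : Z * (P * R) ≠ 0 := mul_ne_zero hZ (mul_ne_zero hP' hR)
      have e1 : a / (Z * R) = a * P / (Z * (P * R)) := by
        rw [div_eq_div_iff (mul_ne_zero hZ hR) hden]; ring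
      have e2 : dl * (Q' / (W * Z * P)) / (R / W) = dl * Q' / (Z * (P * R)) := by
        rw [← mul_div_assoc, div_div_eq_mul_div, div_mul_eq_mul_div, div_div,
          div_eq_div_iff (mul_ne_zero (mul_ne_zero (mul_ne_zero hW' hZ) hP') hR) hden]
        ring
      rw [e1, e2, div_sub_div_same]
    rw [Td, hNp z hz hrne, hQz z hz hrne, h2, hF]
    beta_reduce
    rw [mul_pow, hzd z, pow_succ]
    exact field_id (s z) (Q z) (r z) (r z ^ d) (z ^ (d - 1)) z δ hz hrne
      (pow_ne_zero _ hrne) (pow_ne_zero _ hz)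
  -- eventual equality on the punctured neighborhood
  have hrev : ∀ᶠ z in 𝓝[≠] (0:ℂ), 1 / Td p δ (1/z) = z * r z ^ (d + 1) / F z := by
    have h1 : ∀ᶠ z in 𝓝 (0:ℂ), r z ≠ 0 := cr.continuousAt.eventually_ne (hr0 ▸ hdC)
    filter_upwards [nhdsWithin_le_nhds h1, self_mem_nhdsWithin] with z hrne hz
    rw [hTd z hz hrne, one_div, inv_div]
  have tz : Tendsto (fun z : ℂ => z * r z ^ (d + 1) / F z) (𝓝 0) (𝓝 0) := by
    have hc : ContinuousAt (fun z : ℂ => z * r z ^ (d + 1) / F z) 0 :=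
      ContinuousAt.div (continuousAt_id.mul (cr.continuousAt.pow _)) cF.continuousAt hF0ne
    simpa using hc.tendsto
  refine ⟨Tendsto.congr' (hrev.mono fun z h => h.symm) (tz.mono_left nhdsWithin_le_nhds), ?_, ?_⟩
  · have tz2 : Tendsto (fun z : ℂ => r z ^ (d + 1) / F z) (𝓝 0)
        (𝓝 ((d : ℂ) ^ (d + 1) / (((d : ℂ) - 1) * ((d : ℂ) ^ d - δ * ((d : ℂ) - 1) ^ (d - 1))))) := by
      have hc : ContinuousAt (fun z : ℂ => r z ^ (d + 1) / F z) 0 :=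
        (cr.continuousAt.pow _).div cF.continuousAt hF0ne
      have h := hc.tendsto
      rw [hr0, hF0] at h
      exact h
    have ev2 : ∀ᶠ z in 𝓝[≠] (0:ℂ), (1 / Td p δ (1/z)) / z = r z ^ (d + 1) / F z := by
      filter_upwards [hrev, self_mem_nhdsWithin] with z he hz
      rw [he, div_div, mul_comm z (r z ^ (d + 1)), mul_div_mul_right _ _ hz]
    exact Tendsto.congr' (ev2.mono fun z h => h.symm) (tz2.mono_left nhdsWithin_le_nhds)
  · have hd1R : (0:ℝ) < (d:ℝ) - 1 := by
      have h2 : (2:ℝ) ≤ (d:ℝ) := by exact_mod_cast hd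
      linarith
    have hδA : δ - (d:ℂ)^d/((d:ℂ)-1)^(d-1) ≠ 0 := sub_ne_zero.mpr hδ
    have hXpos : 0 < ‖δ - (d:ℂ)^d/((d:ℂ)-1)^(d-1)‖ := norm_pos_iff.mpr hδA
    have hkey : ((d:ℂ)-1) * ((d:ℂ)^d - δ*((d:ℂ)-1)^(d-1))
        = ((d:ℂ)-1)^d * (((d:ℂ)^d/((d:ℂ)-1)^(d-1)) - δ) := by
      have h := pow_succ' ((d:ℂ)-1) (d-1)
      rw [Nat.sub_add_cancel hd1] at h
      rw [h]
      field_simp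
    have hnorm1 : ‖((d:ℂ)-1)‖ = (d:ℝ)-1 := by
      have h : ((d:ℂ)-1) = (((d:ℝ)-1 : ℝ) : ℂ) := by push_cast; ring
      rw [h, Complex.norm_real, Real.norm_eq_abs, abs_of_pos hd1R]
    have hnormF : ‖((d:ℂ)-1) * ((d:ℂ)^d - δ*((d:ℂ)-1)^(d-1))‖
        = ((d:ℝ)-1)^d * ‖δ - (d:ℂ)^d/((d:ℂ)-1)^(d-1)‖ := by
      rw [hkey, norm_mul, norm_pow, hnorm1, norm_sub_rev]
    have hnormN : ‖((d:ℂ))^(d+1)‖ = (d:ℝ)^(d+1) := by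
      rw [norm_pow, Complex.norm_natCast]
    rw [norm_div, hnormN, hnormF]
    have hcpos : (0:ℝ) < ((d:ℝ)-1)^d := pow_pos hd1R d
    have hdRpos : (0:ℝ) < (d:ℝ) := by exact_mod_cast (by omega : 0 < d)
    have hDpos : (0:ℝ) < (d:ℝ)^(d+1) := pow_pos hdRpos _
    rw [one_lt_div (mul_pos hcpos hXpos), lt_div_iff₀ hcpos]
    constructor
    · intro h
      exact ⟨hXpos, by nlinarith⟩
    · rintro ⟨-, h⟩
      nlinarith
end

section
/- If α is a simple root of the polynomial p (with all roots of p simple), then T''_{p,δ}(α) = (p''(α)/p'(α))·(1-δ). In particular, for Traub's method (δ = 1), α is a fixed point where both the first and second derivative of T_{p,1} vanish, so the local order of convergence is at least cubic. -/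
open Polynomial Filter Topology

noncomputable def Aaux (p : Polynomial ℂ) (z : ℂ) : ℂ :=
  p.eval z * (derivative (derivative p)).eval z / ((derivative p).eval z) ^ 2

noncomputable def Gaux (p : Polynomial ℂ) (δ z : ℂ) : ℂ :=
  Aaux p z - δ * ((derivative p).eval (Np p z) * Aaux p z * (derivative p).eval z
    - p.eval (Np p z) * (derivative (derivative p)).eval z) / ((derivative p).eval z) ^ 2

lemma hasDerivAt_Np (p : Polynomial ℂ) {z : ℂ} (hz : (derivative p).eval z ≠ 0) :
    HasDerivAt (Np p) (Aaux p z) z := by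
  have h := (hasDerivAt_id z).sub ((p.hasDerivAt z).div ((derivative p).hasDerivAt z) hz)
  refine h.congr_deriv ?_
  unfold Aaux
  field_simp
  ring

lemma hasDerivAt_Td (p : Polynomial ℂ) (δ : ℂ) {z : ℂ} (hz : (derivative p).eval z ≠ 0) :
    HasDerivAt (Td p δ) (Gaux p δ z) z := by
  have hN := hasDerivAt_Np p hz
  have hPN : HasDerivAt (fun x => p.eval (Np p x))
      ((derivative p).eval (Np p z) * Aaux p z) z :=
    (p.hasDerivAt (Np p z)).comp z hN
  have h := hN.sub ((hPN.const_mul δ).div ((derivative p).hasDerivAt z) hz)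
  refine h.congr_deriv ?_
  unfold Gaux
  field_simp

lemma hasDerivAt_Gaux (p : Polynomial ℂ) (δ : ℂ) {a : ℂ} (ha : p.eval a = 0)
    (hb : (derivative p).eval a ≠ 0) :
    HasDerivAt (Gaux p δ)
      ((derivative (derivative p)).eval a / (derivative p).eval a * (1 - δ)) a := by
  have hNa : Np p a = a := by simp [Np, ha]
  have hAa : Aaux p a = 0 := by simp [Aaux, ha]
  have hN := hasDerivAt_Np p hb
  have h2 := (derivative p).hasDerivAt a
  have h3 := (derivative (derivative p)).hasDerivAt a
  have hA :=
    ((p.hasDerivAt a).mul h3).div (h2.pow 2) (pow_ne_zero 2 hb)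
  have hPN' : HasDerivAt (fun z => (derivative p).eval (Np p z))
      ((derivative (derivative p)).eval (Np p a) * Aaux p a) a :=
    ((derivative p).hasDerivAt (Np p a)).comp a hN
  have hPN : HasDerivAt (fun z => p.eval (Np p z))
      ((derivative p).eval (Np p a) * Aaux p a) a :=
    (p.hasDerivAt (Np p a)).comp a hN
  have hC := ((hPN'.mul hA).mul h2).sub (hPN.mul h3)
  have hG := hA.sub ((hC.const_mul δ).div (h2.pow 2) (pow_ne_zero 2 hb))
  refine hG.congr_deriv ?_
  simp only [Pi.mul_apply, Pi.div_apply, Pi.pow_apply, Pi.sub_apply]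
  rw [hNa, hAa, ha]
  field_simp
  ring

lemma root_ne_deriv (p : Polynomial ℂ) (hsep : p.Separable) {a : ℂ} (ha : p.eval a = 0) :
    (derivative p).eval a ≠ 0 := by
  have := hsep.eval₂_derivative_ne_zero (RingHom.id ℂ) (x := a) (by simpa using ha)
  simpa using this

lemma main_calc (p : Polynomial ℂ) (δ : ℂ) {a : ℂ} (ha : p.eval a = 0)
    (hb : (derivative p).eval a ≠ 0) :
    deriv (deriv (Td p δ)) a =
      (derivative (derivative p)).eval a / (derivative p).eval a * (1 - δ) := by
  have hU : IsOpen {z : ℂ | (derivative p).eval z ≠ 0} :=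
    isOpen_compl_singleton.preimage (p.derivative.continuous_aeval)
  have hev : deriv (Td p δ) =ᶠ[𝓝 a] Gaux p δ := by
    filter_upwards [hU.mem_nhds hb] with z hz using (hasDerivAt_Td p δ hz).deriv
  rw [hev.deriv_eq]
  exact (hasDerivAt_Gaux p δ ha hb).deriv

theorem traub_second_derivative_at_simple_root (d : ℕ) (hd : 2 ≤ d) (α : Fin d → ℂ)
    (hα : Function.Injective α) (p : Polynomial ℂ) (hp : p = ∏ i, (X - C (α i)))
    (δ : ℂ) (i : Fin d) :
    deriv (deriv (Td p δ)) (α i) =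
      (p.derivative.derivative.eval (α i) / p.derivative.eval (α i)) * (1 - δ) ∧
    (Td p 1 (α i) = α i ∧ deriv (Td p 1) (α i) = 0 ∧ deriv (deriv (Td p 1)) (α i) = 0) := by
  have hroot : p.eval (α i) = 0 := by
    rw [hp, eval_prod]
    exact Finset.prod_eq_zero (Finset.mem_univ i) (by simp)
  have hsep : p.Separable := by
    rw [hp]; exact separable_prod_X_sub_C_iff.2 hα
  have hb : (derivative p).eval (α i) ≠ 0 := root_ne_deriv p hsep hroot
  have hNa : Np p (α i) = α i := by simp [Np, hroot]
  refine ⟨main_calc p δ hroot hb, ?_, ?_, ?_⟩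
  · simp [Td, hNa, hroot]
  · rw [(hasDerivAt_Td p 1 hb).deriv]
    simp [Gaux, Aaux, hNa, hroot]
  · rw [main_calc p 1 hroot hb]; ring
end

section
/- For δ ∈ ℂ, δ ≠ 1 and δ ≠ 4, the critical points of G_δ in ℂ* \ {0,-1} are exactly c_±(δ) = (-(2+δ) ± √((2+δ)² - 4(1-δ)²))/(2(1-δ)), and they satisfy c₊(δ)·c₋(δ) = 1. -/
open Filter Topology

noncomputable def G (δ z : ℂ) : ℂ :=
  z ^ 2 * (z ^ 2 + 2 * z + (1 - δ)) / ((1 - δ) * z ^ 2 + 2 * z + 1)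

theorem Gdelta_free_critical_points (δ : ℂ) (hδ1 : δ ≠ 1) (hδ4 : δ ≠ 4) (s : ℂ)
    (hs : s ^ 2 = (2 + δ) ^ 2 - 4 * (1 - δ) ^ 2)
    (cP cM : ℂ) (hcP : cP = (-(2 + δ) + s) / (2 * (1 - δ)))
    (hcM : cM = (-(2 + δ) - s) / (2 * (1 - δ))) :
    (∀ z : ℂ, z ≠ 0 → z ≠ -1 → (1 - δ) * z ^ 2 + 2 * z + 1 ≠ 0 →
      (deriv (G δ) z = 0 ↔ z = cP ∨ z = cM)) ∧ cP * cM = 1 := by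
  have ha : (1 : ℂ) - δ ≠ 0 := sub_ne_zero.mpr (Ne.symm hδ1)
  have h2a : (2 : ℂ) * (1 - δ) ≠ 0 := mul_ne_zero two_ne_zero ha
  have hprod : cP * cM = 1 := by
    have hnum : (-(2 + δ) + s) * (-(2 + δ) - s) = (2 * (1 - δ)) * (2 * (1 - δ)) := by
      linear_combination -hs
    rw [hcP, hcM, div_mul_div_comm, hnum, div_self (mul_ne_zero h2a h2a)]
  have hsum : (1 - δ) * (cP + cM) = -(2 + δ) := by
    rw [hcP, hcM]
    field_simp
    ring
  have hq : ∀ z : ℂ, (1 - δ) * z ^ 2 + (2 + δ) * z + (1 - δ)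
      = (1 - δ) * ((z - cP) * (z - cM)) := by
    intro z
    linear_combination z * hsum - (1 - δ) * hprod
  refine ⟨fun z hz0 hz1 hD => ?_, hprod⟩
  have hz1' : z + 1 ≠ 0 := fun h => hz1 (by linear_combination h)
  have h1 : HasDerivAt (fun z : ℂ => z ^ 2) (2 * z) z := by
    simpa using hasDerivAt_pow 2 z
  have h2 : HasDerivAt (fun z : ℂ => z ^ 2 + 2 * z + (1 - δ)) (2 * z + 2) z := by
    have := (h1.add ((hasDerivAt_id z).const_mul (2 : ℂ))).add_const (1 - δ)
    simpa using this
  have hN : HasDerivAt (fun z : ℂ => z ^ 2 * (z ^ 2 + 2 * z + (1 - δ)))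
      (2 * z * (z ^ 2 + 2 * z + (1 - δ)) + z ^ 2 * (2 * z + 2)) z := h1.mul h2
  have hDD : HasDerivAt (fun z : ℂ => (1 - δ) * z ^ 2 + 2 * z + 1)
      ((1 - δ) * (2 * z) + 2) z := by
    have := ((h1.const_mul (1 - δ)).add ((hasDerivAt_id z).const_mul (2 : ℂ))).add_const (1 : ℂ)
    simpa using this
  have hG : HasDerivAt (G δ)
      (((2 * z * (z ^ 2 + 2 * z + (1 - δ)) + z ^ 2 * (2 * z + 2)) *
          ((1 - δ) * z ^ 2 + 2 * z + 1) -
        z ^ 2 * (z ^ 2 + 2 * z + (1 - δ)) * ((1 - δ) * (2 * z) + 2)) /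
        ((1 - δ) * z ^ 2 + 2 * z + 1) ^ 2) z := hN.div hDD hD
  rw [hG.deriv]
  have key : (2 * z * (z ^ 2 + 2 * z + (1 - δ)) + z ^ 2 * (2 * z + 2)) *
        ((1 - δ) * z ^ 2 + 2 * z + 1) -
      z ^ 2 * (z ^ 2 + 2 * z + (1 - δ)) * ((1 - δ) * (2 * z) + 2)
      = 2 * z * (z + 1) ^ 2 * ((1 - δ) * ((z - cP) * (z - cM))) := by
    linear_combination 2 * z * (z + 1) ^ 2 * hq z
  have hDp : ((1 - δ) * z ^ 2 + 2 * z + 1) ^ 2 ≠ 0 := pow_ne_zero _ hD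
  have hz1p : (z + 1) ^ 2 ≠ 0 := pow_ne_zero _ hz1'
  rw [key, div_eq_zero_iff, or_iff_left hDp]
  simp only [mul_eq_zero, two_ne_zero, hz0, hz1p, ha, false_or, sub_eq_zero]
end

section
/- For p_n(z) = z^n - 1 with n ≥ 2, the damped Traub map satisfies the explicit formula T_{p_n,δ}(z) = (n^n(n-1)z^{n²} + n^n(1+δ)z^{n(n-1)} - δ((n-1)z^n + 1)^n) / (n^{n+1} z^{n²-1}). -/
open Polynomial Filter Topology

theorem traub_unicritical_formula (n : ℕ) (hn : 2 ≤ n) (δ : ℂ) :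
    ∀ z : ℂ, z ≠ 0 →
      Td (X ^ n - 1) δ z =
        ((n : ℂ) ^ n * ((n : ℂ) - 1) * z ^ (n ^ 2) + (n : ℂ) ^ n * (1 + δ) * z ^ (n * (n - 1)) -
            δ * (((n : ℂ) - 1) * z ^ n + 1) ^ n) /
          ((n : ℂ) ^ (n + 1) * z ^ (n ^ 2 - 1)) := by
  obtain ⟨m, rfl⟩ : ∃ m, n = m + 2 := ⟨n - 2, by omega⟩
  intro z hz
  have h1 : m + 2 - 1 = m + 1 := by omega
  have h3 : (m + 2) * (m + 2 - 1) = m ^ 2 + 3 * m + 2 := by rw [h1]; ring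
  have h4 : (m + 2) ^ 2 - 1 = m ^ 2 + 4 * m + 3 := by
    have : (m + 2) ^ 2 = m ^ 2 + 4 * m + 4 := by ring
    omega
  have h2 : (m + 2) ^ 2 = m ^ 2 + 4 * m + 4 := by ring
  have hc : ((m : ℂ) + 2) ≠ 0 := by
    intro h
    have := congrArg Complex.re h
    simp at this
    linarith
  have hzp : z ^ (m + 1) ≠ 0 := pow_ne_zero _ hz
  have hd : (derivative (X ^ (m + 2) - 1 : Polynomial ℂ)).eval z
      = ((m : ℂ) + 2) * z ^ (m + 1) := by
    simp only [derivative_sub, derivative_one, derivative_X_pow, eval_sub, eval_mul,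
      eval_pow, eval_X, eval_C, eval_natCast, h1, sub_zero]
    push_cast
    ring
  have hNp : Np (X ^ (m + 2) - 1) z
      = (((m : ℂ) + 1) * z ^ (m + 2) + 1) / (((m : ℂ) + 2) * z ^ (m + 1)) := by
    simp only [Np, eval_sub, eval_pow, eval_X, eval_one, hd]
    field_simp
    ring
  set c : ℂ := (m : ℂ) + 2 with hcdef
  set A : ℂ := ((m : ℂ) + 1) * z ^ (m + 2) + 1 with hAdef
  set u : ℂ := c * z ^ (m + 1) with hudef
  set v : ℂ := c ^ (m + 2) * z ^ ((m + 1) * (m + 2)) with hvdef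
  have hu : u ≠ 0 := mul_ne_zero hc hzp
  have hv : v ≠ 0 := mul_ne_zero (pow_ne_zero _ hc) (pow_ne_zero _ hz)
  have e0 : (A / u) ^ (m + 2) - 1 = (A ^ (m + 2) - v) / v := by
    rw [hudef, hvdef, div_pow, mul_pow, ← pow_mul]
    field_simp
  have e1 : Td (X ^ (m + 2) - 1) δ z = (A * v - δ * (A ^ (m + 2) - v)) / (v * u) := by
    simp only [Td, hNp, hd, eval_sub, eval_pow, eval_X, eval_one]
    rw [e0]
    field_simp
  rw [e1, div_eq_div_iff (mul_ne_zero hv hu)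
    (mul_ne_zero (pow_ne_zero _ (by push_cast; exact hc)) (pow_ne_zero _ hz))]
  simp only [hvdef, hudef, hAdef, hcdef, h2, h3, h4]
  push_cast
  ring
end

section
/- If ξ ∈ ℂ satisfies ξ^n = 1, then the damped Traub map for p_n(z) = z^n - 1 commutes with multiplication by ξ: T_{p_n,δ}(ξz) = ξ·T_{p_n,δ}(z) for all z ≠ 0. -/
open Polynomial Filter Topology

theorem traub_unicritical_rotation_symmetry (n : ℕ) (hn : 2 ≤ n) (δ ξ : ℂ) (hξ : ξ ^ n = 1) :
    ∀ z : ℂ, z ≠ 0 → Td (X ^ n - 1) δ (ξ * z) = ξ * Td (X ^ n - 1) δ z := by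
  intro z hz
  have hn0 : (n : ℂ) ≠ 0 := Nat.cast_ne_zero.mpr (by omega)
  have hξ0 : ξ ≠ 0 := by
    intro h
    rw [h, zero_pow (by omega : n ≠ 0)] at hξ
    exact zero_ne_one hξ
  have hzn : z ^ (n - 1) ≠ 0 := pow_ne_zero _ hz
  have hξn1 : ξ ^ (n - 1) * ξ = 1 := by
    rw [← pow_succ]
    have : n - 1 + 1 = n := by omega
    rw [this, hξ]
  have hξn1' : ξ ^ (n - 1) ≠ 0 := pow_ne_zero _ hξ0
  have hmul : (ξ * z) ^ n = z ^ n := by rw [mul_pow, hξ, one_mul]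
  have hmul1 : (ξ * z) ^ (n - 1) = ξ ^ (n - 1) * z ^ (n - 1) := mul_pow _ _ _
  have hNp : Np (X ^ n - 1) (ξ * z) = ξ * Np (X ^ n - 1) z := by
    simp only [Np, eval_sub, eval_pow, eval_X, eval_one, derivative_sub, derivative_one,
      derivative_X_pow, eval_mul, eval_natCast, eval_C, sub_zero, hmul, hmul1]
    field_simp
    ring_nf
    rw [mul_comm ξ (ξ ^ (n - 1)), hξn1]; ring
  have hNpn : (Np (X ^ n - 1) (ξ * z)) ^ n = (Np (X ^ n - 1) z) ^ n := by
    rw [hNp, mul_pow, hξ, one_mul]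
  simp only [Td, eval_sub, eval_pow, eval_one, derivative_sub, derivative_one,
    derivative_X_pow, eval_mul, eval_natCast, eval_C, eval_X, sub_zero, hNp, hNpn, hmul1]
  field_simp
  ring_nf
  rw [mul_comm ξ (ξ ^ (n - 1)), hξn1, hξ]; ring
end

section
/- Let n ≥ 3 and δ ∈ (0,1]. Then for every real x > 1 we have 1 < T_{p_n,δ}(x) < x, and consequently the interval [1,∞) is contained in the immediate basin of attraction of the superattracting fixed point x = 1 of T_{p_n,δ}. -/
open Filter Topology

noncomputable def NpR (n : ℕ) (x : ℝ) : ℝ :=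
  (((n : ℝ) - 1) * x ^ n + 1) / ((n : ℝ) * x ^ (n - 1))

noncomputable def TR (n : ℕ) (δ x : ℝ) : ℝ :=
  NpR n x - δ * ((NpR n x) ^ n - 1) / ((n : ℝ) * x ^ (n - 1))

private lemma key_ineq (m : ℕ) {x : ℝ} (hx : 1 < x) :
    ((m:ℝ)+2) * x^(m+1) < ((m:ℝ)+1) * x^(m+2) + 1 := by
  induction m with
  | zero =>
    norm_num
    nlinarith [sq_nonneg (x-1)]
  | succ k ih =>
    have hx0 : (0:ℝ) < x := lt_trans one_pos hx
    have h1 : (1:ℝ) ≤ x^(k+2) := one_le_pow₀ hx.le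
    have h2 := mul_lt_mul_of_pos_left ih hx0
    have e1 : x^(k+2) = x*x^(k+1) := by ring
    have e2 : x^(k+3) = x*x^(k+2) := by ring
    have h3 : (0:ℝ) ≤ (x^(k+2)-1)*(x-1) := mul_nonneg (by linarith) (by linarith)
    push_cast
    nlinarith [h2, h3]

private lemma Np_bounds {n : ℕ} (hn : 2 ≤ n) {x : ℝ} (hx : 1 < x) :
    1 < NpR n x ∧ NpR n x < x := by
  obtain ⟨m, rfl⟩ : ∃ m, n = m + 2 := ⟨n - 2, by omega⟩
  have hx0 : (0:ℝ) < x := lt_trans one_pos hx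
  have hD : (0:ℝ) < ((m:ℝ)+2) * x ^ (m + 1) := by positivity
  have hsub : m + 2 - 1 = m + 1 := rfl
  constructor
  · rw [NpR, hsub]
    push_cast
    rw [lt_div_iff₀ hD]
    nlinarith [key_ineq m hx]
  · rw [NpR, hsub]
    push_cast
    rw [div_lt_iff₀ hD]
    have h1 : (1:ℝ) < x^(m+2) := one_lt_pow₀ hx (by omega)
    have e : x * x^(m+1) = x^(m+2) := by ring
    nlinarith [h1, e]

private lemma T_bounds {n : ℕ} (hn : 3 ≤ n) {δ : ℝ} (hδ : δ ∈ Set.Ioc (0:ℝ) 1) {x : ℝ}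
    (hx : 1 < x) : 1 < TR n δ x ∧ TR n δ x < x := by
  obtain ⟨hδ0, hδ1⟩ := hδ
  have hx0 : (0:ℝ) < x := lt_trans one_pos hx
  obtain ⟨hy1, hyx⟩ := Np_bounds (n:=n) (by omega) hx
  set y := NpR n x with hy
  have hD : (0:ℝ) < (n:ℝ) * x ^ (n-1) := by
    have : (0:ℝ) < (n:ℝ) := by positivity
    positivity
  have hyn : (0:ℝ) < y ^ n - 1 := by
    have := one_lt_pow₀ hy1 (by omega : n ≠ 0); linarith
  constructor
  · rw [TR, ← hy]
    have hsum : y ^ n - 1 < (y - 1) * ((n:ℝ) * x ^ (n-1)) := by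
      have hgeom : (∑ i ∈ Finset.range n, y ^ i) * (y - 1) = y ^ n - 1 := geom_sum_mul y n
      have hcard : (∑ i ∈ Finset.range n, y ^ i) < (n:ℝ) * x ^ (n-1) := by
        have h := Finset.sum_lt_sum_of_nonempty ((Finset.nonempty_range_iff (n:=n)).mpr (by omega))
          (f := fun i => y ^ i) (g := fun _ => x ^ (n-1)) (fun i hi => by
            have hi' : i ≤ n - 1 := by
              have := Finset.mem_range.mp hi; omega
            calc y ^ i ≤ y ^ (n-1) := pow_le_pow_right₀ hy1.le hi'
              _ < x ^ (n-1) := pow_lt_pow_left₀ hyx (by linarith) (by omega))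
        simpa [Finset.sum_const, nsmul_eq_mul] using h
      have hy1' : (0:ℝ) < y - 1 := by linarith
      calc y ^ n - 1 = (∑ i ∈ Finset.range n, y ^ i) * (y - 1) := hgeom.symm
        _ < ((n:ℝ) * x ^ (n-1)) * (y - 1) := by
            exact mul_lt_mul_of_pos_right hcard hy1'
        _ = (y - 1) * ((n:ℝ) * x ^ (n-1)) := by ring
    have hdiv : δ * (y ^ n - 1) / ((n:ℝ) * x ^ (n-1)) < y - 1 := by
      rw [div_lt_iff₀ hD]
      have : δ * (y ^ n - 1) ≤ y ^ n - 1 := by nlinarith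
      nlinarith
    linarith
  · rw [TR, ← hy]
    have : 0 < δ * (y ^ n - 1) / ((n:ℝ) * x ^ (n-1)) := by positivity
    linarith

private lemma Np_contAt {n : ℕ} (hn : 3 ≤ n) {c : ℝ} (hc : 0 < c) :
    ContinuousAt (NpR n) c := by
  have hden : (n:ℝ) * c ^ (n-1) ≠ 0 := by
    have : (0:ℝ) < (n:ℝ) := by positivity
    positivity
  exact ContinuousAt.div (by fun_prop) (by fun_prop) hden

private lemma T_contAt {n : ℕ} (hn : 3 ≤ n) (δ : ℝ) {c : ℝ} (hc : 0 < c) :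
    ContinuousAt (TR n δ) c := by
  have hden : (n:ℝ) * c ^ (n-1) ≠ 0 := by
    have : (0:ℝ) < (n:ℝ) := by positivity
    positivity
  have hNp := Np_contAt hn hc
  exact hNp.sub (ContinuousAt.div (by fun_prop) (by fun_prop) hden)

private lemma T_one {n : ℕ} (hn : 3 ≤ n) (δ : ℝ) : TR n δ 1 = 1 := by
  have hn0 : (n:ℝ) ≠ 0 := by positivity
  have hNp : NpR n 1 = 1 := by
    rw [NpR]; rw [one_pow, one_pow, mul_one, mul_one]
    field_simp
    ring
  rw [TR, hNp]
  simp

theorem traub_real_basin_unbounded (n : ℕ) (hn : 3 ≤ n) (δ : ℝ) (hδ : δ ∈ Set.Ioc (0 : ℝ) 1) :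
    (∀ x : ℝ, 1 < x → 1 < TR n δ x ∧ TR n δ x < x) ∧
    (∀ x : ℝ, 1 ≤ x → Tendsto (fun k => (TR n δ)^[k] x) atTop (𝓝 1)) := by
  refine ⟨fun x hx => T_bounds hn hδ hx, fun x hx => ?_⟩
  rcases eq_or_lt_of_le hx with h1 | hx1
  · simp only [← h1, Function.iterate_fixed (T_one hn δ)]
    exact tendsto_const_nhds
  · set a : ℕ → ℝ := fun k => (TR n δ)^[k] x with ha
    have hgt : ∀ k, 1 < a k := by
      intro k
      induction k with
      | zero => simpa [ha] using hx1
      | succ m ih =>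
        have : a (m+1) = TR n δ (a m) := Function.iterate_succ_apply' _ _ _
        rw [this]
        exact (T_bounds hn hδ ih).1
    have hstep : ∀ k, a (k+1) ≤ a k := by
      intro k
      have : a (k+1) = TR n δ (a k) := Function.iterate_succ_apply' _ _ _
      rw [this]
      exact (T_bounds hn hδ (hgt k)).2.le
    have hanti : Antitone a := antitone_nat_of_succ_le hstep
    have hbdd : BddBelow (Set.range a) := ⟨1, by rintro y ⟨k, rfl⟩; exact (hgt k).le⟩
    set L : ℝ := ⨅ k, a k with hL
    have htend : Tendsto a atTop (𝓝 L) := tendsto_atTop_ciInf hanti hbdd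
    have hL1 : 1 ≤ L := le_ciInf fun k => (hgt k).le
    rcases eq_or_lt_of_le hL1 with hLe | hLlt
    · rwa [← hLe] at htend
    · exfalso
      have hc : ContinuousAt (TR n δ) L := T_contAt hn δ (by linarith)
      have h2 : Tendsto (fun k => a (k+1)) atTop (𝓝 L) :=
        htend.comp (tendsto_add_atTop_nat 1)
      have h3 : Tendsto (fun k => TR n δ (a k)) atTop (𝓝 (TR n δ L)) :=
        hc.tendsto.comp htend
      have heq : (fun k => a (k+1)) = fun k => TR n δ (a k) := by
        funext k
        exact Function.iterate_succ_apply' _ _ _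
      rw [heq] at h2
      have hfix : TR n δ L = L := tendsto_nhds_unique h3 h2
      have := (T_bounds hn hδ hLlt).2
      linarith
end
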